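/- arXiv:1804.03768 — 4 statements merged into one kernel-verified Lean document; each statement's English description precedes it below -/
import Mathlib

section
/- Let q be a prime power with q ≡ 1 (mod 3), and let π(x) = ax + r and σ(x) = bx + s be elements of AGL(1,q) (a, b ≠ 0) that are adjacent in the contraction graph (i.e., hd(π^△, σ^△) = hd(π, σ) − 3 = q − 4). Then a/b and b/a are the two distinct roots of t² + t + 1 = 0 in GF(q). -/
/-!
Off the three points `F`, `π⁻¹ F`, `σ⁻¹ F` a contraction agrees with the permutation it comes
from, so the disagreement set of `π, σ` lies in that of the contractions plus these three points.
Losing exactly three disagreements therefore forces the three points to be distinct and to be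
agreements of the contractions, which reads `σ (π⁻¹ F) = π F` and `π (σ⁻¹ F) = σ F`. For affine
maps these relations give `(a² + ab + b²)(π F - σ F) = 0` with `π F ≠ σ F`. Finally `q ≡ 1 mod 3`
makes `3 ≠ 0` in the field, so the two roots of `t² + t + 1` (inverse to each other) are distinct.
-/

noncomputable def hd {Ω : Type*} (π σ : Equiv.Perm Ω) : ℕ :=
  Set.ncard {x | π x ≠ σ x}

open scoped Classical in
noncomputable def ctr {Ω : Type*} (F : Ω) (π : Equiv.Perm Ω) : Equiv.Perm Ω :=
  π.trans (Equiv.swap F (π F))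

theorem Set.ne_of_ncard_triple_eq_three {α : Type*} {x y z : α}
    (h : ({x, y, z} : Set α).ncard = 3) : x ≠ y ∧ x ≠ z ∧ y ≠ z := by
  have hpair (u v : α) : ({u, v} : Set α).ncard ≤ 2 :=
    (ncard_insert_le u {v}).trans (by rw [ncard_singleton])
  refine ⟨?_, ?_, ?_⟩ <;> rintro rfl
  · have := hpair x z; simp_all
  · have := hpair x y; rw [pair_comm, insert_eq_of_mem (by simp)] at h; omega
  · have := hpair x y; simp_all

theorem Set.disjoint_of_subset_union_of_ncard_add_le {α : Type*} [Finite α] {A B C : Set α}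
    (hABC : A ⊆ B ∪ C) (hA : B.ncard + C.ncard ≤ A.ncard) : Disjoint B C := by
  have hunion := ncard_union_add_ncard_inter B C
  have hle := ncard_le_ncard hABC
  rw [disjoint_iff_inter_eq_empty, ← ncard_eq_zero]
  omega

section Contraction

variable {Ω : Type*} (F : Ω) (π σ : Equiv.Perm Ω)

theorem ctr_apply_symm_self : ctr F π (π.symm F) = π F := by
  classical
  simp [ctr]

variable {F π} in
theorem ctr_apply_of_ne {x : Ω} (hxF : x ≠ F) (hx : x ≠ π.symm F) : ctr F π x = π x := by
  classical
  exact Equiv.swap_apply_of_ne_of_ne (fun h => hx (π.eq_symm_apply.mpr h))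
    (fun h => hxF (π.injective h))

theorem setOf_ne_subset_setOf_ctr_ne_union :
    {x | π x ≠ σ x} ⊆ {x | ctr F π x ≠ ctr F σ x} ∪ {F, π.symm F, σ.symm F} := by
  intro x hx
  by_cases hxF : x = F
  · simp [hxF]
  by_cases hxπ : x = π.symm F
  · simp [hxπ]
  by_cases hxσ : x = σ.symm F
  · simp [hxσ]
  left
  simpa [ctr_apply_of_ne hxF hxπ, ctr_apply_of_ne hxF hxσ] using hx

theorem ne_and_disjoint_of_hd_eq_hd_ctr_add_three [Finite Ω]
    (h : hd π σ = hd (ctr F π) (ctr F σ) + 3) :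
    (F ≠ π.symm F ∧ F ≠ σ.symm F ∧ π.symm F ≠ σ.symm F) ∧
      Disjoint {x | ctr F π x ≠ ctr F σ x} {F, π.symm F, σ.symm F} := by
  have hsub := setOf_ne_subset_setOf_ctr_ne_union F π σ
  have hle := (Set.ncard_le_ncard hsub).trans (Set.ncard_union_le _ _)
  have htriple : ({F, π.symm F, σ.symm F} : Set Ω).ncard ≤ 3 :=
    (Set.ncard_insert_le _ _).trans (by grw [Set.ncard_insert_le, Set.ncard_singleton])
  unfold hd at h
  have h3 : ({F, π.symm F, σ.symm F} : Set Ω).ncard = 3 := by omega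
  exact ⟨Set.ne_of_ncard_triple_eq_three h3,
    Set.disjoint_of_subset_union_of_ncard_add_le hsub (by omega)⟩

variable {F π σ} in
theorem apply_symm_eq_of_ctr_eq (hF : F ≠ π.symm F) (hπσ : π.symm F ≠ σ.symm F)
    (h : ctr F π (π.symm F) = ctr F σ (π.symm F)) : σ (π.symm F) = π F := by
  rw [ctr_apply_symm_self, ctr_apply_of_ne hF.symm hπσ] at h
  exact h.symm

end Contraction

theorem sq_add_mul_add_sq_eq_zero_of_affine {R : Type*} [CommRing R] [NoZeroDivisors R]
    {π σ : Equiv.Perm R} {a b r s : R} (hπ : ∀ x, π x = a * x + r) (hσ : ∀ x, σ x = b * x + s)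
    (F : R) (hπσ : σ (π.symm F) = π F) (hσπ : π (σ.symm F) = σ F) (hne : π F ≠ σ F) :
    a ^ 2 + a * b + b ^ 2 = 0 := by
  have hp := π.apply_symm_apply F
  have ht := σ.apply_symm_apply F
  simp only [hπ, hσ] at hp ht hπσ hσπ hne
  have hkey : (a ^ 2 + a * b + b ^ 2) * ((a * F + r) - (b * F + s)) = 0 := by
    linear_combination (-a ^ 2) * hπσ + (a * b) * hp + b ^ 2 * hσπ - (a * b) * ht
  exact (mul_eq_zero.mp hkey).resolve_right (sub_ne_zero.mpr hne)

theorem FiniteField.three_ne_zero_of_card_mod_three {K : Type*} [Field K] [Fintype K]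
    (hq : Fintype.card K % 3 = 1) : (3 : K) ≠ 0 := by
  intro h3
  have hcard := FiniteField.cast_card_eq_zero K
  rw [← Nat.div_add_mod (Fintype.card K) 3, hq] at hcard
  push_cast at hcard
  simp [h3] at hcard

theorem div_ne_div_and_sq_add_self_add_one_eq_zero {K : Type*} [Field K] (h3 : (3 : K) ≠ 0) {a b : K} (ha : a ≠ 0)
    (hb : b ≠ 0) (h : a ^ 2 + a * b + b ^ 2 = 0) :
    a / b ≠ b / a ∧ (a / b) ^ 2 + a / b + 1 = 0 ∧ (b / a) ^ 2 + b / a + 1 = 0 := by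
  refine ⟨fun heq => ?_, by field_simp; linear_combination h, by field_simp; linear_combination h⟩
  have hsq : a ^ 2 = b ^ 2 := by field_simp at heq; linear_combination heq
  have hb2 : b = -2 * a := mul_left_cancel₀ ha (by linear_combination h + hsq)
  exact h3 (mul_left_cancel₀ (pow_ne_zero 2 ha) (by subst hb2; linear_combination -hsq))

theorem stmt5_general {K : Type*} [Field K] [Fintype K] (q : ℕ) (hq : Fintype.card K = q)
    (hq3 : q % 3 = 1) (F : K) (π σ : Equiv.Perm K) (a b r s : K)
    (ha : a ≠ 0) (hb : b ≠ 0)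
    (hπ : ∀ x, π x = a * x + r) (hσ : ∀ x, σ x = b * x + s)
    (hadj1 : (hd (ctr F π) (ctr F σ) : ℤ) = (hd π σ : ℤ) - 3) :
    a / b ≠ b / a ∧ (a / b) ^ 2 + a / b + 1 = 0 ∧ (b / a) ^ 2 + b / a + 1 = 0 := by
  obtain ⟨⟨hFπ, hFσ, hπσ⟩, hdisj⟩ := ne_and_disjoint_of_hd_eq_hd_ctr_add_three F π σ (by omega)
  have hctr_eq {x} (hx : x ∈ ({F, π.symm F, σ.symm F} : Set K)) : ctr F π x = ctr F σ x :=
    not_not.mp (Set.disjoint_right.mp hdisj hx)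
  have e1 : σ (π.symm F) = π F := apply_symm_eq_of_ctr_eq hFπ hπσ (hctr_eq (by simp))
  have e2 : π (σ.symm F) = σ F :=
    apply_symm_eq_of_ctr_eq hFσ hπσ.symm (hctr_eq (by simp)).symm
  have hne : π F ≠ σ F := fun h => hFπ (σ.injective (e1.trans h)).symm
  exact div_ne_div_and_sq_add_self_add_one_eq_zero (FiniteField.three_ne_zero_of_card_mod_three (hq ▸ hq3)) ha hb
    (sq_add_mul_add_sq_eq_zero_of_affine hπ hσ F e1 e2 hne)

theorem stmt5 {K : Type*} [Field K] [Fintype K] (q : ℕ) (hq : Fintype.card K = q)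
    (hq3 : q % 3 = 1) (F : K) (π σ : Equiv.Perm K) (a b r s : K)
    (ha : a ≠ 0) (hb : b ≠ 0)
    (hπ : ∀ x, π x = a * x + r) (hσ : ∀ x, σ x = b * x + s)
    (hadj1 : (hd (ctr F π) (ctr F σ) : ℤ) = (hd π σ : ℤ) - 3)
    (hadj2 : (hd (ctr F π) (ctr F σ) : ℤ) = (q : ℤ) - 4) :
    a / b ≠ b / a ∧ (a / b) ^ 2 + a / b + 1 = 0 ∧ (b / a) ^ 2 + b / a + 1 = 0 :=
  stmt5_general q hq hq3 F π σ a b r s ha hb hπ hσ hadj1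
end

section
/- Let q ≡ 1 (mod 3) be a prime power. An element π of AGL(1,q) is an isolated vertex of the contraction graph of AGL(1,q) if and only if π(F) = F, and there are exactly q − 1 such elements. -/
/-- The set of affine permutations `x ↦ a x + b`, `a ≠ 0`, of the field `K`. -/
def AGL (K : Type*) [Field K] : Set (Equiv.Perm K) :=
  {π | ∃ a b : K, a ≠ 0 ∧ ∀ x, π x = a * x + b}

/-- Adjacency in the contraction graph of `AGL(1,q)` with distinguished element `F`. -/
def AGLAdj {K : Type*} [Field K] (F : K) (π σ : Equiv.Perm K) : Prop :=
  π ∈ AGL K ∧ σ ∈ AGL K ∧ π F ≠ F ∧ σ F ≠ F ∧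
    σ (π⁻¹ F) = π F ∧ π (σ⁻¹ F) = σ F

/-!
If `π F ≠ F`, let `τ` be the affine rotation `y ↦ π F + ω (y - F)` by a primitive cube root of
unity `ω` (which exists because `3 ∣ q - 1`). It cycles `F ↦ π F ↦ τ (π F) ↦ F`, and this
three-cycle is exactly what makes `σ = τ π` adjacent to `π`. The affine maps fixing `F` are the
dilations `x ↦ a (x - F) + F`, one for each `a ≠ 0`.
-/

theorem Equiv.Perm.mul_apply_ne_and_of_three_cycle {α : Type*} {π τ : Equiv.Perm α} {F : α}
    (hF : π F ≠ F)
    (hτF : τ F = π F) (hτ : τ (τ (π F)) = F) :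
    (τ * π) F ≠ F ∧ (τ * π) (π⁻¹ F) = π F ∧ π ((τ * π)⁻¹ F) = (τ * π) F := by
  have hτinv : τ⁻¹ F = τ (π F) := Equiv.Perm.inv_eq_iff_eq.mpr hτ.symm
  refine ⟨fun h => hF ?_, by simpa using hτF, by simpa [mul_inv_rev] using hτinv⟩
  rw [Perm.mul_apply] at h
  rw [← hτF, ← h, hτ, h]

section AffineGroup

variable {K : Type*} [Field K]

def affPerm (a : Kˣ) (b : K) : Equiv.Perm K where
  toFun x := a * x + b
  invFun y := a⁻¹ * (y - b)
  left_inv x := by simp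
  right_inv y := by simp

@[simp]
theorem affPerm_apply (a : Kˣ) (b x : K) : affPerm a b x = a * x + b := rfl

theorem affPerm_mem_AGL (a : Kˣ) (b : K) : affPerm a b ∈ AGL K :=
  ⟨a, b, a.ne_zero, fun _ => rfl⟩

theorem mul_mem_AGL {π σ : Equiv.Perm K} (hπ : π ∈ AGL K) (hσ : σ ∈ AGL K) : π * σ ∈ AGL K := by
  obtain ⟨a, b, ha, hπ⟩ := hπ
  obtain ⟨c, d, hc, hσ⟩ := hσ
  exact ⟨a * c, a * d + b, mul_ne_zero ha hc,
    fun x => by rw [Equiv.Perm.mul_apply, hπ, hσ]; ring⟩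

theorem FiniteField.exists_sq_add_self_add_one_eq_zero [Fintype K]
    (hK : Fintype.card K % 3 = 1) : ∃ ω : K, ω ^ 2 + ω + 1 = 0 := by
  classical
  have : Fact (Nat.Prime 3) := ⟨Nat.prime_three⟩
  obtain ⟨ζ, hζ⟩ := exists_prime_orderOf_dvd_card (G := Kˣ) 3 (by
    rw [Fintype.card_units]; omega)
  have hprim : IsPrimitiveRoot (ζ : K) 3 :=
    IsPrimitiveRoot.coe_units_iff.mpr (hζ ▸ IsPrimitiveRoot.orderOf ζ)
  have hsum := hprim.geom_sum_eq_zero (by norm_num)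
  simp only [Finset.sum_range_succ, Finset.sum_range_zero] at hsum
  exact ⟨ζ, by linear_combination hsum⟩

theorem exists_mem_AGL_three_cycle {ω : K} (hω : ω ^ 2 + ω + 1 = 0) (F G : K) :
    ∃ τ ∈ AGL K, τ F = G ∧ τ (τ G) = F := by
  have hω0 : ω ≠ 0 := by rintro rfl; norm_num at hω
  refine ⟨affPerm (Units.mk0 ω hω0) (G - ω * F), affPerm_mem_AGL _ _, ?_, ?_⟩
  · simp
  · simp only [affPerm_apply, Units.val_mk0]
    linear_combination (G - F) * hω

theorem exists_AGLAdj {ω : K} (hω : ω ^ 2 + ω + 1 = 0) {π : Equiv.Perm K} (hπ : π ∈ AGL K)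
    {F : K} (hF : π F ≠ F) : ∃ σ, AGLAdj F π σ := by
  obtain ⟨τ, hτ, hτF, hτ3⟩ := exists_mem_AGL_three_cycle hω F (π F)
  obtain ⟨hσF, hσ, hπσ⟩ := Equiv.Perm.mul_apply_ne_and_of_three_cycle hF hτF hτ3
  exact ⟨τ * π, hπ, mul_mem_AGL hτ hπ, hF, hσF, hσ, hπσ⟩

theorem setOf_mem_AGL_apply_eq_self_eq_range (F : K) :
    {π : Equiv.Perm K | π ∈ AGL K ∧ π F = F} =
      Set.range fun a : Kˣ => affPerm a (F - a * F) := by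
  ext π
  constructor
  · rintro ⟨⟨a, b, ha, hπ⟩, hπF⟩
    refine ⟨Units.mk0 a ha, Equiv.ext fun x => ?_⟩
    rw [hπ] at hπF
    simp only [affPerm_apply, Units.val_mk0, hπ]
    linear_combination -hπF
  · rintro ⟨a, rfl⟩
    exact ⟨affPerm_mem_AGL _ _, by simp⟩

theorem ncard_setOf_mem_AGL_apply_eq_self (F : K) :
    {π : Equiv.Perm K | π ∈ AGL K ∧ π F = F}.ncard = Nat.card K - 1 := by
  rw [setOf_mem_AGL_apply_eq_self_eq_range, Set.ncard_range_of_injective, Nat.card_units]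
  intro a c h
  have h₁ := congrArg (· (F + 1)) h
  simp only [affPerm_apply] at h₁
  exact Units.ext (by linear_combination h₁)

end AffineGroup

theorem stmt7 {K : Type*} [Field K] [Fintype K] (q : ℕ) (hq : Fintype.card K = q)
    (hq3 : q % 3 = 1) (F : K) :
    (∀ π ∈ AGL K, ((∀ σ : Equiv.Perm K, ¬ AGLAdj F π σ) ↔ π F = F)) ∧
      Set.ncard {π : Equiv.Perm K | π ∈ AGL K ∧ π F = F} = q - 1 := by
  obtain ⟨ω, hω⟩ := FiniteField.exists_sq_add_self_add_one_eq_zero (hq ▸ hq3 : _ % 3 = 1)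
  refine ⟨fun π hπ => ⟨fun hiso => ?_, fun hπF σ hadj => hadj.2.2.1 hπF⟩, ?_⟩
  · by_contra hF
    obtain ⟨σ, hadj⟩ := exists_AGLAdj hω hπ hF
    exact hiso σ hadj
  · rw [ncard_setOf_mem_AGL_apply_eq_self, Nat.card_eq_fintype_card, hq]
end

section
/- For an even prime power q ≡ 1 (mod 3), q ≥ 8, M(q−1, q−3) ≥ (q−1)(q+2)/3. -/
open Equiv Function

section HammingDistance

variable {Ω : Type*}

lemma hd_add_ncard_agree [Finite Ω] (π σ : Perm Ω) :
    hd π σ + {x | π x = σ x}.ncard = Nat.card Ω := by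
  rw [hd, add_comm, ← Set.ncard_add_ncard_compl {x | π x = σ x}]
  rfl

lemma hd_permCongr {Ω' : Type*} (e : Ω ≃ Ω') (π σ : Perm Ω) :
    hd (e.permCongr π) (e.permCongr σ) = hd π σ := by
  rw [hd, hd, ← Set.ncard_image_of_injective _ e.injective]
  congr 1
  ext y
  simp only [Equiv.permCongr_apply, Set.mem_ofPred_eq, Set.mem_image, ne_eq, e.apply_eq_iff_eq]
  exact ⟨fun h => ⟨_, h, e.apply_symm_apply y⟩, by rintro ⟨x, hx, rfl⟩; simpa using hx⟩

end HammingDistance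

theorem exists_perm_code_of_ncard_agree_le {ι Ω : Type*} [Finite ι] [Finite Ω] {n t : ℕ}
    (hn : Nat.card Ω = n) (ht : t < n) (Φ : ι → Perm Ω)
    (hΦ : Pairwise fun i j => {x | Φ i x = Φ j x}.ncard ≤ t) :
    ∃ A : Finset (Perm (Fin n)),
      (∀ π ∈ A, ∀ σ ∈ A, π ≠ σ → n - t ≤ hd π σ) ∧ A.card = Nat.card ι := by
  classical
  have := Fintype.ofFinite ι
  let e : Ω ≃ Fin n := Finite.equivFinOfCardEq hn
  have hdist : ∀ i j, i ≠ j → n - t ≤ hd (Φ i) (Φ j) := fun i j hij => by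
    have := hd_add_ncard_agree (Φ i) (Φ j)
    have := hΦ hij
    omega
  have hΦinj : Injective Φ := fun i j hij => by
    by_contra hne
    have hself : hd (Φ j) (Φ j) = 0 := by simp [hd]
    have := hdist i j hne
    rw [hij, hself] at this
    omega
  refine ⟨Finset.univ.image (e.permCongr ∘ Φ), ?_, ?_⟩
  · simp only [Finset.mem_image, Finset.mem_univ, true_and, comp_apply]
    rintro _ ⟨i, rfl⟩ _ ⟨j, rfl⟩ hij
    rw [hd_permCongr]
    exact hdist i j fun h => hij (by rw [h])
  · rw [Finset.card_image_of_injective _ (e.permCongr.injective.comp hΦinj),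
      Finset.card_univ, Nat.card_eq_fintype_card]

section NonzeroPerm

variable {F : Type*} [Field F]

def nonzeroPerm (e : Perm F) (he : e 0 = 0) : Perm {x : F // x ≠ 0} :=
  e.subtypePerm fun _ => e.injective.ne_iff' he

lemma ncard_agree_nonzeroPerm_le_two {e f : Perm F} (he : e 0 = 0) (hf : f 0 = 0) {u v : F}
    (h : {x | x ≠ 0 ∧ e x = f x} ⊆ {u, v}) :
    {x | nonzeroPerm e he x = nonzeroPerm f hf x}.ncard ≤ 2 := by
  refine (Set.ncard_le_ncard_of_injOn Subtype.val (fun x hx => h ⟨x.2, ?_⟩)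
    Subtype.val_injective.injOn (Set.toFinite _)).trans ((Set.ncard_insert_le _ _).trans (by simp))
  simpa [nonzeroPerm, Subtype.ext_iff] using hx

end NonzeroPerm

section SwapAffine

variable {F : Type*} [Field F] [DecidableEq F]

def swapAffine (a : Fˣ) (b : F) : Perm F :=
  (Units.mulLeft a).trans ((Equiv.addRight b).trans (swap 0 b))

lemma swapAffine_zero (a : Fˣ) (b : F) : swapAffine a b 0 = 0 := by
  simp [swapAffine]

lemma swapAffine_apply_of_ne_zero (a : Fˣ) (b : F) {x : F} (hx : x ≠ 0) :
    swapAffine a b x = if a * x + b = 0 then b else a * x + b := by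
  have : (a : F) * x + b ≠ b := by simpa using hx
  simp [swapAffine, swap_apply_def, this]

lemma agree_mulLeft_swapAffine_subset (c a : Fˣ) {b : F} (hb : b ≠ 0) :
    {x | x ≠ 0 ∧ Units.mulLeft c x = swapAffine a b x} ⊆ {-b / a, b / (c - a)} := by
  rintro x ⟨hx, h⟩
  change (c : F) * x = _ at h
  rw [swapAffine_apply_of_ne_zero a b hx] at h
  rw [Set.mem_insert_iff, Set.mem_singleton_iff]
  split_ifs at h with hab
  · left
    rw [eq_div_iff a.ne_zero]
    linear_combination hab
  · have hca : (c : F) - a ≠ 0 := fun hca => hb (by linear_combination x * hca - h)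
    right
    rw [eq_div_iff hca]
    linear_combination h

lemma agree_swapAffine_swapAffine_subset (a : Fˣ) {b d : F} (hbd : b ≠ d) :
    {x | x ≠ 0 ∧ swapAffine a b x = swapAffine a d x} ⊆ {-b / a, -d / a} := by
  rintro x ⟨hx, h⟩
  rw [swapAffine_apply_of_ne_zero a b hx, swapAffine_apply_of_ne_zero a d hx] at h
  rw [Set.mem_insert_iff, Set.mem_singleton_iff]
  by_cases hab : a * x + b = 0
  · left
    rw [eq_div_iff a.ne_zero]
    linear_combination hab
  by_cases had : a * x + d = 0
  · right
    rw [eq_div_iff a.ne_zero]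
    linear_combination had
  rw [if_neg hab, if_neg had] at h
  exact absurd (add_left_cancel h) hbd

lemma exists_agree_swapAffine_subset_pair {a c : Fˣ} {b d : F} (hac : (a : F) ^ 3 ≠ c ^ 3)
    (hd : d ≠ 0) :
    ∃ u v : F, {x | x ≠ 0 ∧ swapAffine a b x = swapAffine c d x} ⊆ {u, v} := by
  set S := {x | x ≠ 0 ∧ swapAffine a b x = swapAffine c d x}
  have hac' : (a : F) - c ≠ 0 := sub_ne_zero.2 fun h => hac (by rw [h])
  have generic : ∀ x ∈ S, a * x + b ≠ 0 → c * x + d ≠ 0 → x = (d - b) / (a - c) := by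
    rintro x ⟨hx, h⟩ hab hcd
    rw [swapAffine_apply_of_ne_zero a b hx, swapAffine_apply_of_ne_zero c d hx,
      if_neg hab, if_neg hcd] at h
    rw [eq_div_iff hac']
    linear_combination h
  have not_common_pole : ∀ x ∈ S, a * x + b = 0 → c * x + d ≠ 0 := by
    rintro x ⟨hx, h⟩ hab hcd
    rw [swapAffine_apply_of_ne_zero a b hx, swapAffine_apply_of_ne_zero c d hx,
      if_pos hab, if_pos hcd] at h
    exact mul_ne_zero hac' hx (by linear_combination hab - hcd - h)
  have not_both_poles : ∀ x ∈ S, ∀ y ∈ S, a * x + b = 0 → c * y + d = 0 → False := by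
    intro x hxS y hyS hab hcd
    have hxcd : c * x + d ≠ 0 := not_common_pole x hxS hab
    have hyab : a * y + b ≠ 0 := fun h => not_common_pole y hyS h hcd
    obtain ⟨hx, hx'⟩ := hxS
    obtain ⟨hy, hy'⟩ := hyS
    rw [swapAffine_apply_of_ne_zero a b hx, swapAffine_apply_of_ne_zero c d hx, if_pos hab,
      if_neg hxcd] at hx'
    rw [swapAffine_apply_of_ne_zero a b hy, swapAffine_apply_of_ne_zero c d hy, if_neg hyab,
      if_pos hcd] at hy'
    have key : d * (a ^ 2 + a * c + c ^ 2) = 0 := by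
      linear_combination c * (a * hx' + c * hab) - (a + c) * (c * hy' - a * hcd)
    exact hac (by linear_combination (a - c) * (mul_eq_zero.1 key).resolve_left hd)
  by_cases hpole : ∃ x ∈ S, a * x + b = 0
  · obtain ⟨x₁, hx₁S, hx₁⟩ := hpole
    refine ⟨(d - b) / (a - c), x₁, fun x hx => ?_⟩
    rw [Set.mem_insert_iff, Set.mem_singleton_iff]
    by_cases hab : a * x + b = 0
    · exact Or.inr (mul_left_cancel₀ a.ne_zero (by linear_combination hab - hx₁))
    by_cases hcd : c * x + d = 0
    · exact (not_both_poles x₁ hx₁S x hx hx₁ hcd).elim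
    exact Or.inl (generic x hx hab hcd)
  · push Not at hpole
    refine ⟨(d - b) / (a - c), -d / c, fun x hx => ?_⟩
    rw [Set.mem_insert_iff, Set.mem_singleton_iff]
    by_cases hcd : c * x + d = 0
    · exact Or.inr (by rw [eq_div_iff c.ne_zero]; linear_combination hcd)
    exact Or.inl (generic x hx (hpole x hx) hcd)

end SwapAffine

lemma card_quotient_ker_powMonoidHom_three (F : Type*) [Field F] [Finite F]
    (h : 3 ∣ Nat.card F - 1) :
    Nat.card (Fˣ ⧸ (powMonoidHom 3 : Fˣ →* Fˣ).ker) = (Nat.card F - 1) / 3 := by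
  have := IsCyclic.index_powMonoidHom_ker (G := Fˣ) 3
  rwa [Subgroup.index, Nat.card_units, Nat.gcd_eq_right h] at this

section Construction

variable (F : Type*) [Field F] [DecidableEq F]

noncomputable def cubeCode :
    Fˣ ⊕ (Fˣ ⧸ (powMonoidHom 3 : Fˣ →* Fˣ).ker) × Fˣ → Perm {x : F // x ≠ 0}
  | .inl c => nonzeroPerm (Units.mulLeft c) (mul_zero _)
  | .inr (s, b) => nonzeroPerm (swapAffine s.out b) (swapAffine_zero _ _)

lemma ncard_agree_cubeCode_le_two :
    Pairwise fun i j => {x | cubeCode F i x = cubeCode F j x}.ncard ≤ 2 := by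
  have out_cube_ne : ∀ s t : Fˣ ⧸ (powMonoidHom 3 : Fˣ →* Fˣ).ker, s ≠ t →
      (s.out : F) ^ 3 ≠ (t.out : F) ^ 3 := fun s t hst h => hst <| by
    apply QuotientGroup.kerLift_injective (powMonoidHom 3 : Fˣ →* Fˣ)
    rw [← QuotientGroup.out_eq' s, ← QuotientGroup.out_eq' t, QuotientGroup.kerLift_mk,
      QuotientGroup.kerLift_mk]
    exact Units.ext (by simpa using h)
  rintro (c | ⟨s, b⟩) (c' | ⟨t, d⟩) hij <;> dsimp only [cubeCode]
  · refine ncard_agree_nonzeroPerm_le_two (u := 0) (v := 0) _ _ fun x ⟨hx, h⟩ => ?_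
    exact (hij (congrArg _ (Units.ext (mul_right_cancel₀ hx h)))).elim
  · exact ncard_agree_nonzeroPerm_le_two _ _ (agree_mulLeft_swapAffine_subset c _ d.ne_zero)
  · convert ncard_agree_nonzeroPerm_le_two _ _
      (agree_mulLeft_swapAffine_subset c' s.out b.ne_zero) using 2
    ext
    exact eq_comm
  · by_cases hst : s = t
    · subst hst
      have hbd : (b : F) ≠ d := fun h => hij (by rw [Units.ext h])
      exact ncard_agree_nonzeroPerm_le_two _ _ (agree_swapAffine_swapAffine_subset _ hbd)
    · obtain ⟨u, v, huv⟩ := exists_agree_swapAffine_subset_pair (out_cube_ne s t hst) d.ne_zero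
      exact ncard_agree_nonzeroPerm_le_two _ _ huv

end Construction

theorem exists_perm_code_of_card_mod_three {F : Type*} [Field F] [Finite F] {q : ℕ}
    (hcard : Nat.card F = q) (hq3 : q % 3 = 1) :
    ∃ A : Finset (Perm (Fin (q - 1))),
      (∀ π ∈ A, ∀ σ ∈ A, π ≠ σ → q - 3 ≤ hd π σ) ∧ (q - 1) * (q + 2) / 3 ≤ A.card := by
  classical
  subst hcard
  have hq : 1 < Nat.card F := Finite.one_lt_card
  obtain ⟨m, hm⟩ : 3 ∣ Nat.card F - 1 := by omega
  have hΩ : Nat.card {x : F // x ≠ 0} = Nat.card F - 1 := by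
    rw [← Nat.card_congr unitsEquivNeZero, Nat.card_units]
  obtain ⟨A, hdist, hcardA⟩ := exists_perm_code_of_ncard_agree_le hΩ (by omega) (cubeCode F)
    (ncard_agree_cubeCode_le_two F)
  refine ⟨A, fun π hπ σ hσ h => (by omega : _ ≤ Nat.card F - 1 - 2).trans (hdist π hπ σ hσ h), ?_⟩
  rw [hcardA, Nat.card_sum, Nat.card_prod, card_quotient_ker_powMonoidHom_three F ⟨m, hm⟩,
    Nat.card_units, hm, Nat.mul_div_cancel_left m three_pos,
    show Nat.card F + 2 = 3 * (m + 1) by omega]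
  exact Nat.div_le_of_le_mul (le_of_eq (by ring))

theorem stmt10_general (q : ℕ) (hq : IsPrimePow q) (hq3 : q % 3 = 1) :
    ∃ A : Finset (Equiv.Perm (Fin (q - 1))),
      (∀ π ∈ A, ∀ σ ∈ A, π ≠ σ → q - 3 ≤ hd π σ) ∧ (q - 1) * (q + 2) / 3 ≤ A.card := by
  obtain ⟨p, k, hp, hk, rfl⟩ := hq
  have : Fact p.Prime := ⟨Nat.prime_iff.mpr hp⟩
  exact exists_perm_code_of_card_mod_three (GaloisField.card p k hk.ne') hq3

theorem stmt10 (q : ℕ) (hq : IsPrimePow q) (heven : Even q) (hq3 : q % 3 = 1)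
    (hq8 : 8 ≤ q) :
    ∃ A : Finset (Equiv.Perm (Fin (q - 1))),
      (∀ π ∈ A, ∀ σ ∈ A, π ≠ σ → q - 3 ≤ hd π σ) ∧ (q - 1) * (q + 2) / 3 ≤ A.card :=
  stmt10_general q hq hq3
end

section
/- Let q ≡ 1 (mod 3) be an odd prime power, q ≥ 13, and consider the graph on GF(q) × GF(q) with (i,a) adjacent to (j,b) iff (b−a)(j−i) = 1. This graph is connected. -/
/-- The component of the contraction graph of `PGL(2,q)` corresponding to the
parameter `r`: vertices `(i,a)` stand for the maps `x ↦ a + r/(x-i)`, and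
`(i,a)`, `(j,b)` are adjacent iff `(b-a)(j-i) = r`. -/
def pglGraph (K : Type*) [Field K] (r : K) : SimpleGraph (K × K) where
  Adj v w := v ≠ w ∧ (w.2 - v.2) * (w.1 - v.1) = r
  symm := ⟨by
    intro v w h
    exact ⟨h.1.symm, by linear_combination h.2⟩⟩
  loopless := ⟨fun v h => h.1 rfl⟩

/-!
Two vertices with the same first coordinate `i` are joined by the path
`(i, a) — (i + t, a + r/t) — (i - t, a + r/(2t)) — (i, b)` with `t = 3r / (2(b - a))`.
The swap `(i, a) ↦ (a, i)` is an automorphism, so the same holds for vertices with the same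
second coordinate, and `(i, a) — (i, 0) — (j, 0) — (j, b)` connects any two vertices.
In a finite field of order `q` with `q ≡ 1 (mod 2)` and `q ≡ 1 (mod 3)`, both `2` and `3`
are nonzero because `(q : K) = 0`.
-/

namespace pglGraph

variable {K : Type*} [Field K] {r : K}

lemma adj_of_fst_ne {i a j b : K} (hij : i ≠ j) (h : (b - a) * (j - i) = r) :
    (pglGraph K r).Adj (i, a) (j, b) :=
  ⟨fun he => hij (congrArg Prod.fst he), h⟩

variable (K r) in
def swapIso : pglGraph K r ≃g pglGraph K r where
  toEquiv := Equiv.prodComm K K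
  map_rel_iff' {v w} := by
    simp only [pglGraph, Equiv.prodComm_apply, ne_eq, Prod.swap_inj, Prod.fst_swap,
      Prod.snd_swap]
    exact and_congr_right fun _ => by constructor <;> intro h <;> linear_combination h

lemma reachable_of_fst_eq (hr : r ≠ 0) (h2 : (2 : K) ≠ 0) (h3 : (3 : K) ≠ 0) (i a b : K) :
    (pglGraph K r).Reachable (i, a) (i, b) := by
  rcases eq_or_ne b a with rfl | hba
  · rfl
  have hba' : b - a ≠ 0 := sub_ne_zero.mpr hba
  set t : K := 3 * r / (2 * (b - a)) with ht_def
  have ht : t ≠ 0 := div_ne_zero (mul_ne_zero h3 hr) (mul_ne_zero h2 hba')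
  have e1 : (pglGraph K r).Adj (i, a) (i + t, a + r / t) :=
    adj_of_fst_ne (by simpa using ht) (by field_simp; ring)
  have e2 : (pglGraph K r).Adj (i + t, a + r / t) (i - t, a + r / (2 * t)) := by
    refine adj_of_fst_ne (fun he => mul_ne_zero h2 ht (by linear_combination he)) ?_
    field_simp
    ring
  have e3 : (pglGraph K r).Adj (i - t, a + r / (2 * t)) (i, b) := by
    refine adj_of_fst_ne (by simpa using ht) ?_
    rw [ht_def]
    field_simp
    ring
  exact e1.reachable.trans (e2.reachable.trans e3.reachable)

theorem connected (hr : r ≠ 0) (h2 : (2 : K) ≠ 0) (h3 : (3 : K) ≠ 0) :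
    (pglGraph K r).Connected := by
  refine SimpleGraph.Connected.mk fun ⟨i, a⟩ ⟨j, b⟩ => ?_
  have hij : (pglGraph K r).Reachable (i, 0) (j, 0) :=
    (reachable_of_fst_eq hr h2 h3 0 i j).map (swapIso K r).toHom
  exact (reachable_of_fst_eq hr h2 h3 i a 0).trans (hij.trans (reachable_of_fst_eq hr h2 h3 j 0 b))

end pglGraph

lemma FiniteField.natCast_ne_zero_of_card_mod_eq_one {K : Type*} [Field K] [Fintype K] {n : ℕ}
    (h : Fintype.card K % n = 1) : (n : K) ≠ 0 := by
  intro hn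
  have hq := FiniteField.cast_card_eq_zero K
  rw [← Nat.div_add_mod (Fintype.card K) n, h] at hq
  simp [hn] at hq

theorem stmt16_general {K : Type*} [Field K] [Fintype K] (q : ℕ) (hq : Fintype.card K = q)
    (hodd : Odd q) (hq3 : q % 3 = 1) :
    (pglGraph K 1).Connected := by
  subst hq
  have h2 : ((2 : ℕ) : K) ≠ 0 :=
    FiniteField.natCast_ne_zero_of_card_mod_eq_one (Nat.odd_iff.mp hodd)
  have h3 : ((3 : ℕ) : K) ≠ 0 := FiniteField.natCast_ne_zero_of_card_mod_eq_one hq3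
  exact pglGraph.connected one_ne_zero (by exact_mod_cast h2) (by exact_mod_cast h3)

theorem stmt16 {K : Type*} [Field K] [Fintype K] (q : ℕ) (hq : Fintype.card K = q)
    (hodd : Odd q) (hq3 : q % 3 = 1) (hq13 : 13 ≤ q) :
    (pglGraph K 1).Connected :=
  stmt16_general q hq hodd hq3
end
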